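/- Let γ be a Dyck path of length 2n and σ_γ the associated 231-avoiding permutation. Let I ⊂ [n] be an interval of length at most n^{0.49}. If h_i > n^{0.49} for all i ∈ I, then σ_γ has at most one fixed point with index in I. -/

import Mathlib

/-!
Write `v_i` for the position reached by the `i`-th up-step; counting up-steps gives
`h_i = 2i - v_i`. The `i`-th excursion runs from `v_i - 1` to `v_i - 1 + l_i`, and `l_i` is even
by parity, so at a fixed point `l_i = 2 h_i`. For fixed points `i < j` with `j - i < h_i, h_j`
we get `v_j - v_i = 2(j - i) - (h_j - h_i) < 2 h_i`: the `j`-th excursion starts inside the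
`i`-th one. Excursions are laminar, so `h_j > h_i` and the `j`-th excursion ends first,
`2 h_j < 2 h_i - (v_j - v_i)`, i.e. `h_j - h_i < -2 (j - i) < 0`: a contradiction.
-/

/-- A Dyck path of length `2n`, as a function `ℕ → ℤ`. -/
def IsDyckPathFn (n : ℕ) (γ : ℕ → ℤ) : Prop :=
  γ 0 = 0 ∧ γ (2 * n) = 0 ∧ (∀ x, x ≤ 2 * n → 0 ≤ γ x) ∧
    (∀ x, x < 2 * n → γ (x + 1) = γ x + 1 ∨ γ (x + 1) = γ x - 1)

/-- The sorted list of positions in `[1, 2n]` reached by an up-step of `γ`. -/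
def upPositions (n : ℕ) (γ : ℕ → ℤ) : List ℕ :=
  ((Finset.Icc 1 (2 * n)).filter (fun x => γ x = γ (x - 1) + 1)).sort (· ≤ ·)

/-- `vPos n γ i` is the position just after the `i`-th up-step of `γ`. -/
def vPos (n : ℕ) (γ : ℕ → ℤ) (i : ℕ) : ℕ := (upPositions n γ).getD (i - 1) 0

/-- The height of `γ` just after its `i`-th up-step. -/
def hgt (n : ℕ) (γ : ℕ → ℤ) (i : ℕ) : ℤ := γ (vPos n γ i)

/-- The length of the excursion of `γ` started by its `i`-th up-step: the least
`l ≥ 1` with `γ (vPos i - 1 + l) = hgt i - 1`. -/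
noncomputable def excLen (n : ℕ) (γ : ℕ → ℤ) (i : ℕ) : ℕ :=
  sInf {l : ℕ | 1 ≤ l ∧ γ (vPos n γ i - 1 + l) = hgt n γ i - 1}

/-- The 231-avoiding permutation associated to a Dyck path:
`σ_γ i = i + l_i / 2 - h_i`. -/
noncomputable def perm231 (n : ℕ) (γ : ℕ → ℤ) (i : ℕ) : ℤ :=
  (i : ℤ) + ((excLen n γ i / 2 : ℕ) : ℤ) - hgt n γ i

open Finset

noncomputable def firstReturn (γ : ℕ → ℤ) (a : ℕ) : ℕ :=
  sInf {l : ℕ | 1 ≤ l ∧ γ (a + l) = γ a}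

def IsExcursion (γ : ℕ → ℤ) (a L : ℕ) : Prop :=
  γ (a + L) = γ a ∧ ∀ l, 1 ≤ l → l < L → γ a < γ (a + l)

theorem isExcursion_firstReturn {N : ℕ} {γ : ℕ → ℤ} {a : ℕ}
    (hstep : ∀ x < N, γ (x + 1) = γ x + 1 ∨ γ (x + 1) = γ x - 1)
    (ha : a < N) (hup : γ (a + 1) = γ a + 1) (hN : γ N ≤ γ a) :
    IsExcursion γ a (firstReturn γ a) ∧ a + firstReturn γ a ≤ N := by
  classical
  have hN' : γ (a + (N - a)) ≤ γ a := by rwa [Nat.add_sub_cancel' ha.le]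
  have hex : ∃ l, 1 ≤ l ∧ γ (a + l) ≤ γ a := ⟨N - a, by omega, hN'⟩
  set m := Nat.find hex
  obtain ⟨hm1, hm⟩ : 1 ≤ m ∧ γ (a + m) ≤ γ a := Nat.find_spec hex
  have hmN : m ≤ N - a := Nat.find_min' hex ⟨by omega, hN'⟩
  have above : ∀ l, 1 ≤ l → l < m → γ a < γ (a + l) := fun l hl hlm => by
    have := Nat.find_min hex hlm
    push Not at this
    exact this hl
  have hm_eq : γ (a + m) = γ a := by
    have hm2 : 2 ≤ m := by
      by_contra
      have hm_one : m = 1 := by omega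
      rw [hm_one, hup] at hm
      omega
    have hprev := above (m - 1) (by omega) (by omega)
    have hlast := hstep (a + (m - 1)) (by omega)
    rw [show a + (m - 1) + 1 = a + m by omega] at hlast
    omega
  have hfr : firstReturn γ a = m :=
    le_antisymm (Nat.sInf_le ⟨hm1, hm_eq⟩)
      (le_csInf ⟨m, hm1, hm_eq⟩ fun l ⟨hl1, hl⟩ => Nat.find_min' hex ⟨hl1, hl.le⟩)
  rw [hfr]
  exact ⟨⟨hm_eq, above⟩, by omega⟩

theorem IsExcursion.nested {γ : ℕ → ℤ} {a b La Lb : ℕ} (ha : IsExcursion γ a La)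
    (hb : IsExcursion γ b Lb) (hab : a < b) (hba : b < a + La) :
    γ a < γ b ∧ b + Lb < a + La := by
  have hγb : γ a < γ b := by
    simpa [Nat.add_sub_cancel' hab.le] using ha.2 (b - a) (by omega) (by omega)
  refine ⟨hγb, ?_⟩
  by_contra! hend
  have hend_eq : b + (a + La - b) = a + La := by omega
  rcases (show a + La - b < Lb ∨ a + La - b = Lb by omega) with hlt | heq
  · have := hb.2 (a + La - b) (by omega) hlt
    rw [hend_eq, ha.1] at this
    omega
  · have := hb.1
    rw [← heq, hend_eq, ha.1] at this
    omega

def upSteps (n : ℕ) (γ : ℕ → ℤ) : Finset ℕ :=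
  (Finset.Icc 1 (2 * n)).filter (fun x => γ x = γ (x - 1) + 1)

theorem vPos_eq_nth (n : ℕ) (γ : ℕ → ℤ) (i : ℕ) :
    vPos n γ i = Nat.nth (· ∈ upSteps n γ) (i - 1) := by
  rw [Nat.nth_eq_getD_sort (p := (· ∈ upSteps n γ)) (upSteps n γ).finite_toSet,
    finite_toSet_toFinset]
  rfl

namespace IsDyckPathFn

variable {n : ℕ} {γ : ℕ → ℤ}

theorem add_eq_two_mul_count (hγ : IsDyckPathFn n γ) {x : ℕ} (hx : x ≤ 2 * n) :
    γ x + x = 2 * Nat.count (· ∈ upSteps n γ) (x + 1) := by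
  induction x with
  | zero => simp [Nat.count_succ, upSteps, hγ.1]
  | succ x ih =>
    rw [Nat.count_succ]
    have hstep := hγ.2.2.2 x (by omega)
    by_cases hup : γ (x + 1) = γ x + 1
    · have hmem : x + 1 ∈ upSteps n γ := by
        simp only [upSteps, mem_filter, mem_Icc, Nat.add_sub_cancel, hup, and_true]
        omega
      simp only [hmem, if_true]
      push_cast
      linarith [ih (by omega)]
    · have hmem : x + 1 ∉ upSteps n γ := by simp [upSteps, hup]
      simp only [hmem, if_false]
      push_cast
      omega

theorem card_upSteps (hγ : IsDyckPathFn n γ) : #(upSteps n γ) = n := by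
  have h := hγ.add_eq_two_mul_count le_rfl
  have hsub : upSteps n γ ⊆ range (2 * n + 1) := fun x hx => by
    simp only [upSteps, mem_filter, mem_Icc] at hx
    simp only [mem_range]
    omega
  rw [hγ.2.1, Nat.count_eq_card_filter_range, filter_mem_eq_inter,
    inter_eq_right.2 hsub] at h
  omega

theorem even_add (hγ : IsDyckPathFn n γ) {x : ℕ} (hx : x ≤ 2 * n) : Even (γ x + x) :=
  ⟨_, (hγ.add_eq_two_mul_count hx).trans (two_mul _)⟩

theorem vPos_mem_upSteps (hγ : IsDyckPathFn n γ) {i : ℕ} (hi1 : 1 ≤ i) (hin : i ≤ n) :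
    vPos n γ i ∈ upSteps n γ := by
  rw [vPos_eq_nth]
  exact Nat.nth_mem_of_lt_card (p := (· ∈ upSteps n γ)) (upSteps n γ).finite_toSet
    (by rw [finite_toSet_toFinset, hγ.card_upSteps]; omega)

theorem vPos_mem_Icc (hγ : IsDyckPathFn n γ) {i : ℕ} (hi1 : 1 ≤ i) (hin : i ≤ n) :
    vPos n γ i ∈ Icc 1 (2 * n) :=
  (mem_filter.1 (hγ.vPos_mem_upSteps hi1 hin)).1

theorem hgt_eq_add_one (hγ : IsDyckPathFn n γ) {i : ℕ} (hi1 : 1 ≤ i) (hin : i ≤ n) :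
    hgt n γ i = γ (vPos n γ i - 1) + 1 :=
  (mem_filter.1 (hγ.vPos_mem_upSteps hi1 hin)).2

theorem vPos_lt_vPos (hγ : IsDyckPathFn n γ) {i j : ℕ} (hi1 : 1 ≤ i) (hij : i < j)
    (hjn : j ≤ n) : vPos n γ i < vPos n γ j := by
  rw [vPos_eq_nth, vPos_eq_nth]
  exact Nat.nth_lt_nth_of_lt_card (p := (· ∈ upSteps n γ)) (upSteps n γ).finite_toSet
    (by omega) (by rw [finite_toSet_toFinset, hγ.card_upSteps]; omega)

theorem hgt_add_vPos (hγ : IsDyckPathFn n γ) {i : ℕ} (hi1 : 1 ≤ i) (hin : i ≤ n) :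
    hgt n γ i + vPos n γ i = 2 * i := by
  have hmem := hγ.vPos_mem_upSteps hi1 hin
  have hcount : Nat.count (· ∈ upSteps n γ) (vPos n γ i) = i - 1 := by
    rw [vPos_eq_nth]
    exact Nat.count_nth_of_lt_card_finite (p := (· ∈ upSteps n γ)) (upSteps n γ).finite_toSet
      (by rw [finite_toSet_toFinset, hγ.card_upSteps]; omega)
  rw [hgt, hγ.add_eq_two_mul_count (mem_Icc.1 (hγ.vPos_mem_Icc hi1 hin)).2, Nat.count_succ, hcount, if_pos hmem]
  omega

theorem isExcursion_excLen (hγ : IsDyckPathFn n γ) {i : ℕ} (hi1 : 1 ≤ i) (hin : i ≤ n) :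
    IsExcursion γ (vPos n γ i - 1) (excLen n γ i) ∧ vPos n γ i - 1 + excLen n γ i ≤ 2 * n := by
  obtain ⟨hv1, hv⟩ := mem_Icc.1 (hγ.vPos_mem_Icc hi1 hin)
  have hup := hγ.hgt_eq_add_one hi1 hin
  have hfr : excLen n γ i = firstReturn γ (vPos n γ i - 1) := by
    rw [excLen, firstReturn, hup, add_sub_cancel_right]
  rw [hfr]
  exact isExcursion_firstReturn hγ.2.2.2 (by omega) (by rw [Nat.sub_add_cancel hv1, ← hup]; rfl)
    (by rw [hγ.2.1]; linarith [hγ.2.2.1 _ (hv.trans' (Nat.sub_le _ 1))])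

theorem excLen_eq_two_mul_hgt (hγ : IsDyckPathFn n γ) {i : ℕ} (hi1 : 1 ≤ i) (hin : i ≤ n)
    (hfix : perm231 n γ i = i) : (excLen n γ i : ℤ) = 2 * hgt n γ i := by
  obtain ⟨⟨hret, -⟩, hend⟩ := hγ.isExcursion_excLen hi1 hin
  have heven : Even (excLen n γ i) := by
    have := (hγ.even_add hend).sub (hγ.even_add (hend.trans' (Nat.le_add_right _ _)))
    rw [hret] at this
    push_cast at this
    simpa using this
  rw [perm231] at hfix
  have := Nat.div_two_mul_two_of_even heven
  omega

theorem perm231_ne_self_of_perm231_eq_self (hγ : IsDyckPathFn n γ) {i j : ℕ} (hi1 : 1 ≤ i)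
    (hij : i < j) (hjn : j ≤ n) (hhi : (j - i : ℤ) < hgt n γ i) (hhj : (j - i : ℤ) < hgt n γ j)
    (hfi : perm231 n γ i = i) : perm231 n γ j ≠ j := by
  intro hfj
  have hv := hγ.vPos_lt_vPos hi1 hij hjn
  have hvi := hγ.hgt_add_vPos hi1 (by omega)
  have hvj := hγ.hgt_add_vPos (by omega) hjn
  have hli := hγ.excLen_eq_two_mul_hgt hi1 (by omega) hfi
  have hlj := hγ.excLen_eq_two_mul_hgt (by omega) hjn hfj
  obtain ⟨hexi, -⟩ := hγ.isExcursion_excLen hi1 (by omega)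
  obtain ⟨hexj, -⟩ := hγ.isExcursion_excLen (by omega) hjn
  have hsi := hγ.hgt_eq_add_one hi1 (by omega)
  have hsj := hγ.hgt_eq_add_one (by omega) hjn
  have hvi1 := mem_Icc.1 (hγ.vPos_mem_Icc hi1 (by omega))
  by_cases hstart : vPos n γ j - 1 < vPos n γ i - 1 + excLen n γ i
  · have := hexi.nested hexj (by omega) hstart
    omega
  · omega

end IsDyckPathFn

/-- If `I ⊆ [1,n]` is an interval of length at most `n^{0.49}` on which all the
heights `h_i` exceed `n^{0.49}`, then `σ_γ` has at most one fixed point in `I`. -/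
theorem perm231_at_most_one_fixed_point (n : ℕ) (γ : ℕ → ℤ)
    (hγ : IsDyckPathFn n γ) (p q : ℕ)
    (hI : Finset.Icc p q ⊆ Finset.Icc 1 n)
    (hlen : ((Finset.Icc p q).card : ℝ) ≤ (n : ℝ) ^ (0.49 : ℝ))
    (hh : ∀ i ∈ Finset.Icc p q, (n : ℝ) ^ (0.49 : ℝ) < ((hgt n γ i : ℤ) : ℝ)) :
    ((Finset.Icc p q).filter (fun i => perm231 n γ i = (i : ℤ))).card ≤ 1 := by
  refine card_le_one.2 fun i hi j hj => ?_
  wlog hij : i < j generalizing i j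
  · rcases (not_lt.1 hij).lt_or_eq with hji | hji
    · exact (this j hj i hi hji).symm
    · exact hji.symm
  obtain ⟨hiI, hfi⟩ := mem_filter.1 hi
  obtain ⟨hjI, hfj⟩ := mem_filter.1 hj
  have hgap : ((j - i : ℤ) : ℝ) < #(Icc p q) := by
    rw [Nat.card_Icc]
    have := mem_Icc.1 hiI
    have := mem_Icc.1 hjI
    exact_mod_cast (by omega : (j - i : ℤ) < (q + 1 - p : ℕ))
  have hgap_hgt : ∀ k ∈ Icc p q, (j - i : ℤ) < hgt n γ k := fun k hk => by
    exact_mod_cast hgap.trans_le (hlen.trans (hh k hk).le)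
  exact absurd hfj (hγ.perm231_ne_self_of_perm231_eq_self (mem_Icc.1 (hI hiI)).1 hij
    (mem_Icc.1 (hI hjI)).2 (hgap_hgt i hiI) (hgap_hgt j hjI) hfi)
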